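/- For each $k$ with $0 \le k \le n-1$ and $\alpha = \operatorname{arccot}(a/b)$ where $b \neq 0$, the real number $\lambda_k = b \cot\frac{\alpha + k\pi}{n} - a$ satisfies $w(\lambda_k + \bar{w})^n = \bar{w}(\lambda_k + w)^n$ where $w = a+bi$. -/

import Mathlib

/-!
Put `α = arccot (a / b)`, `θ = (α + kπ) / n ∈ (0, π)` and `z = λ + w`, so that `λ + w̄ = z̄`.
Since `cot α = a / b` and `λ = b cot θ - a`, we get `w = (b / sin α) e^{iα}` and
`z = (b / sin θ) e^{iθ}`. Then `w z̄ⁿ` and `w̄ zⁿ` are the same real multiple of `e^{i(α - nθ)}`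
and `e^{i(nθ - α)}` respectively, and these agree because `nθ - α = kπ`.
-/

open Complex Real

/-- `arccot x ∈ (0, π)`. -/
noncomputable def arccot (x : ℝ) : ℝ := Real.pi / 2 - Real.arctan x

open ComplexConjugate

lemma arccot_pos (x : ℝ) : 0 < arccot x := by
  have := arctan_lt_pi_div_two x
  unfold arccot; linarith

lemma arccot_lt_pi (x : ℝ) : arccot x < π := by
  have := neg_pi_div_two_lt_arctan x
  unfold arccot; linarith

lemma cot_arccot (x : ℝ) : Real.cot (arccot x) = x := by
  rw [arccot, Real.cot_eq_cos_div_sin, Real.cos_pi_div_two_sub, Real.sin_pi_div_two_sub,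
    ← Real.tan_eq_sin_div_cos, Real.tan_arctan]

lemma ofReal_mul_cot_add_mul_I {θ : ℝ} (hθ : Real.sin θ ≠ 0) (b : ℝ) :
    ((b * Real.cot θ : ℝ) : ℂ) + b * I = ((b / Real.sin θ : ℝ) : ℂ) * exp (θ * I) := by
  have : Complex.sin θ ≠ 0 := by exact_mod_cast hθ
  rw [← cos_add_sin_I]
  push_cast
  rw [Complex.cot_eq_cos_div_sin]
  field_simp

lemma mul_conj_pow_eq_conj_mul_pow {r s α θ : ℝ} {n : ℕ} {k : ℤ} (h : n * θ = α + k * π) :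
    (r * exp (α * I)) * conj ((s : ℂ) * exp (θ * I)) ^ n =
      conj ((r : ℂ) * exp (α * I)) * ((s : ℂ) * exp (θ * I)) ^ n := by
  have hC : (n * θ : ℂ) = α + k * π := by exact_mod_cast h
  have hexp : exp ((α - n * θ) * I) = exp ((n * θ - α) * I) :=
    exp_eq_exp_iff_exists_int.mpr ⟨-k, by rw [hC]; push_cast; ring⟩
  simp only [map_mul, conj_ofReal, ← exp_conj, conj_I, mul_pow, ← Complex.exp_nat_mul]
  calc _ = r * s ^ n * exp ((α - n * θ) * I) := by
          rw [sub_mul, sub_eq_add_neg, Complex.exp_add]; ring_nf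
    _ = _ := by rw [hexp, sub_mul, sub_eq_add_neg, Complex.exp_add]; ring_nf

theorem lambda_k_root (a b : ℝ) (hb : b ≠ 0) (n : ℕ) (hn : 1 ≤ n)
    (k : ℕ) (hk : k ≤ n - 1) (w : ℂ) (hw : w = a + b * I)
    (lam : ℝ) (hlam : lam = b * Real.cot ((arccot (a / b) + k * Real.pi) / n) - a) :
    w * ((lam : ℂ) + (starRingEnd ℂ) w) ^ n =
      (starRingEnd ℂ) w * ((lam : ℂ) + w) ^ n := by
  set α := arccot (a / b)
  set θ := (α + k * π) / n with hθ
  have hn₀ : (0 : ℝ) < n := by exact_mod_cast hn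
  have hnθ : n * θ = α + (k : ℤ) * π := by rw [hθ]; push_cast; field_simp
  have hθ_pos : 0 < θ := by have := arccot_pos (a / b); positivity
  have hθ_lt : θ < π := by
    have hk' : (k : ℝ) + 1 ≤ n := by exact_mod_cast (by omega : k + 1 ≤ n)
    rw [hθ, div_lt_iff₀ hn₀]
    nlinarith [arccot_lt_pi (a / b), pi_pos]
  have hα : w = ((b / Real.sin α : ℝ) : ℂ) * exp (α * I) := by
    rw [← ofReal_mul_cot_add_mul_I (sin_pos_of_pos_of_lt_pi (arccot_pos _) (arccot_lt_pi _)).ne',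
      cot_arccot, mul_div_cancel₀ a hb, hw]
  have hz : (lam : ℂ) + w = ((b / Real.sin θ : ℝ) : ℂ) * exp (θ * I) := by
    rw [← ofReal_mul_cot_add_mul_I (sin_pos_of_pos_of_lt_pi hθ_pos hθ_lt).ne', hlam, hw]
    push_cast; ring
  have hz' : (lam : ℂ) + conj w = conj ((lam : ℂ) + w) := by rw [map_add, conj_ofReal]
  rw [hz', hz, hα]
  exact mul_conj_pow_eq_conj_mul_pow hnθ
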